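/- Let w be an aperiodic infinite word over an alphabet of size k, let u be a factor of w containing all k letters, and let vu be a factor of w distinct from u that begins with an occurrence of u. Then the abelian class of v has at least k abelian returns in w. -/

import Mathlib

/-- The factor of length `n` of the infinite word `w` starting at position `i`. -/
def wordAt {α : Type*} (w : ℕ → α) (i n : ℕ) : List α :=
  (List.range n).map (fun k => w (i + k))

/-- `u` is a factor of the infinite word `w`. -/
def IsFactorW {α : Type*} (w : ℕ → α) (u : List α) : Prop :=
  ∃ i, u = wordAt w i u.length

/-- `w` is recurrent: every factor occurs infinitely often. -/
def RecurrentW {α : Type*} (w : ℕ → α) : Prop :=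
  ∀ u, IsFactorW w u → ∀ N, ∃ i, N ≤ i ∧ u = wordAt w i u.length

/-- `w` is (purely) periodic. -/
def PeriodicW {α : Type*} (w : ℕ → α) : Prop :=
  ∃ T, 0 < T ∧ ∀ n, w (n + T) = w n

/-- `w` is ultimately periodic. -/
def UltPeriodicW {α : Type*} (w : ℕ → α) : Prop :=
  ∃ T, 0 < T ∧ ∃ n₀, ∀ n, n₀ ≤ n → w (n + T) = w n

/-- Two finite words are abelian equivalent: same number of occurrences of each letter. -/
def AbEquiv {α : Type*} [DecidableEq α] (u v : List α) : Prop :=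
  ∀ a : α, u.count a = v.count a

/-- Positions of occurrences of words abelian equivalent to `u` in `w`. -/
def abOcc {α : Type*} [DecidableEq α] (w : ℕ → α) (u : List α) : Set ℕ :=
  {i | AbEquiv (wordAt w i u.length) u}

/-- The semi-abelian returns to (the abelian class of) `u` in `w`: words extending from one
occurrence of the abelian class of `u` to the next one. -/
def semiAbReturns {α : Type*} [DecidableEq α] (w : ℕ → α) (u : List α) : Set (List α) :=
  {r | ∃ i j, i ∈ abOcc w u ∧ j ∈ abOcc w u ∧ i < j ∧
      (∀ k, i < k → k < j → k ∉ abOcc w u) ∧ r = wordAt w i (j - i)}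

/-- Positions of (exact) occurrences of `u` in `w`. -/
def occW {α : Type*} [DecidableEq α] (w : ℕ → α) (u : List α) : Set ℕ :=
  {i | u = wordAt w i u.length}

/-- The ordinary return words of `u` in `w`. -/
def returnWords {α : Type*} [DecidableEq α] (w : ℕ → α) (u : List α) : Set (List α) :=
  {r | ∃ i j, i ∈ occW w u ∧ j ∈ occW w u ∧ i < j ∧
      (∀ k, i < k → k < j → k ∉ occW w u) ∧ r = wordAt w i (j - i)}

/-- `u` has exactly `k` semi-abelian returns in `w`. -/
def ExactlyKSemiAbReturns {α : Type*} [DecidableEq α] (w : ℕ → α) (u : List α) (k : ℕ) : Prop :=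
  ∃ f : Fin k → List α, Function.Injective f ∧ semiAbReturns w u = Set.range f

/-- `u` has exactly `k` abelian returns in `w`: there are `k` pairwise non-abelian-equivalent
representatives so that every semi-abelian return is abelian equivalent to exactly one of them,
and each representative is realized. -/
def ExactlyKAbReturns {α : Type*} [DecidableEq α] (w : ℕ → α) (u : List α) (k : ℕ) : Prop :=
  ∃ f : Fin k → List α,
    (∀ i j, AbEquiv (f i) (f j) → i = j) ∧
    (∀ r ∈ semiAbReturns w u, ∃ i, AbEquiv r (f i)) ∧
    (∀ i, ∃ r ∈ semiAbReturns w u, AbEquiv r (f i))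

/-- `u` has at most `k` abelian returns in `w`. -/
def AtMostKAbReturns {α : Type*} [DecidableEq α] (w : ℕ → α) (u : List α) (k : ℕ) : Prop :=
  ∃ f : Fin k → List α, ∀ r ∈ semiAbReturns w u, ∃ i, AbEquiv r (f i)

/-- `u` has at least `k` abelian returns in `w`. -/
def AtLeastKAbReturns {α : Type*} [DecidableEq α] (w : ℕ → α) (u : List α) (k : ℕ) : Prop :=
  ∃ f : Fin k → List α,
    (∀ i j, AbEquiv (f i) (f j) → i = j) ∧
    (∀ i, ∃ r ∈ semiAbReturns w u, AbEquiv r (f i))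

/-- `u` has at least two semi-abelian returns in `w`. -/
def AtLeastTwoSemiAbReturns {α : Type*} [DecidableEq α] (w : ℕ → α) (u : List α) : Prop :=
  ∃ r₁ r₂, r₁ ∈ semiAbReturns w u ∧ r₂ ∈ semiAbReturns w u ∧ r₁ ≠ r₂

/-- The factor complexity of `w`. -/
noncomputable def complexityW {α : Type*} (w : ℕ → α) (n : ℕ) : ℕ :=
  {u : List α | u.length = n ∧ IsFactorW w u}.ncard

/-- A Sturmian word: aperiodic binary word with factor complexity `n + 1`. -/
def SturmianW (w : ℕ → Bool) : Prop :=
  ¬ UltPeriodicW w ∧ ∀ n, complexityW w n = n + 1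

/-- Right special factor of a binary word. -/
def RightSpecial (w : ℕ → Bool) (B : List Bool) : Prop :=
  IsFactorW w (B ++ [false]) ∧ IsFactorW w (B ++ [true])

/-- Left special factor of a binary word. -/
def LeftSpecial (w : ℕ → Bool) (B : List Bool) : Prop :=
  IsFactorW w (false :: B) ∧ IsFactorW w (true :: B)

/-- Bispecial factor of a binary word. -/
def Bispecial (w : ℕ → Bool) (B : List Bool) : Prop :=
  RightSpecial w B ∧ LeftSpecial w B

/-- `w` is `c`-balanced. -/
def CBalanced {α : Type*} [DecidableEq α] (w : ℕ → α) (c : ℕ) : Prop :=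
  ∀ u v : List α, IsFactorW w u → IsFactorW w v → u.length = v.length →
    ∀ a : α, |((u.count a : ℤ) - (v.count a : ℤ))| ≤ (c : ℤ)


/-!
If `v ++ u` begins with `u`, then the occurrence of `v ++ u` has period `|v|` on its first
`|v| + |u|` letters, so sliding a window of length `|v|` one step at a time through it never
changes its Parikh vector: the `|u| + 1` consecutive positions starting at the occurrence are
all abelian occurrences of `v`. Between two consecutive ones the return word is a single letter,
and these letters run through `u`, hence through the whole alphabet.
-/

section WordAt

variable {α : Type*} (w : ℕ → α)

@[simp]
lemma wordAt_length (i n : ℕ) : (wordAt w i n).length = n := by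
  simp [wordAt]

@[simp]
lemma getElem_wordAt (i n x : ℕ) (hx : x < (wordAt w i n).length) :
    (wordAt w i n)[x] = w (i + x) := by
  simp [wordAt]

lemma wordAt_add (i n m : ℕ) : wordAt w i (n + m) = wordAt w i n ++ wordAt w (i + n) m := by
  simp [wordAt, List.range_add, Function.comp_def, add_assoc]

lemma wordAt_one (i : ℕ) : wordAt w i 1 = [w i] := by
  simp [wordAt]

lemma wordAt_succ (i n : ℕ) : wordAt w i (n + 1) = w i :: wordAt w (i + 1) n := by
  simp [wordAt, List.range_succ_eq_map, Function.comp_def, add_comm, add_left_comm]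

lemma take_wordAt (i n m : ℕ) : (wordAt w i n).take m = wordAt w i (min m n) := by
  simp [wordAt, ← List.map_take, List.take_range]

end WordAt

section Occurrences

variable {α : Type*} [DecidableEq α] {w : ℕ → α}

lemma getElem_eq_of_mem_occW {u : List α} {i : ℕ} (hi : i ∈ occW w u) (x : ℕ)
    (hx : x < u.length) : u[x] = w (i + x) :=
  (List.getElem_of_eq hi hx).trans (getElem_wordAt ..)

lemma exists_lt_of_mem_occW {u : List α} {i : ℕ} {a : α} (hi : i ∈ occW w u) (ha : a ∈ u) :
    ∃ x < u.length, w (i + x) = a := by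
  obtain ⟨x, hx, rfl⟩ := List.getElem_of_mem ha
  exact ⟨x, hx, (getElem_eq_of_mem_occW hi x hx).symm⟩

lemma mem_abOcc_of_mem_occW {v : List α} {i : ℕ} (hi : i ∈ occW w v) : i ∈ abOcc w v :=
  fun a => by rw [← hi]

lemma exists_occW_of_isFactorW_append {u v : List α} (hvu : IsFactorW w (v ++ u))
    (hpre : u <+: v ++ u) :
    ∃ p, p ∈ occW w v ∧ p ∈ occW w u ∧ p + v.length ∈ occW w u := by
  obtain ⟨p, hp⟩ := hvu
  rw [List.length_append, wordAt_add] at hp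
  obtain ⟨hv, hu⟩ := List.append_inj hp (by simp)
  refine ⟨p, hv, ?_, hu⟩
  rw [List.prefix_iff_eq_take, hp, ← wordAt_add, take_wordAt] at hpre
  simpa [occW] using hpre

lemma abEquiv_wordAt_succ {i n : ℕ} (h : w (i + n) = w i) :
    AbEquiv (wordAt w (i + 1) n) (wordAt w i n) := by
  have slide : wordAt w i n ++ [w i] = w i :: wordAt w (i + 1) n := by
    rw [← wordAt_succ, ← h, ← wordAt_one, ← wordAt_add]
  intro a
  have := congrArg (List.count a) slide
  simp only [List.count_append, List.count_cons, List.count_nil] at this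
  omega

lemma add_mem_abOcc_of_periodic {v : List α} {p m : ℕ} (hp : p ∈ abOcc w v)
    (hper : ∀ x < m, w (p + x + v.length) = w (p + x)) :
    ∀ t ≤ m, p + t ∈ abOcc w v := by
  intro t ht
  induction t with
  | zero => simpa using hp
  | succ t ih =>
    intro a
    rw [← add_assoc, abEquiv_wordAt_succ (hper t ht) a]
    exact ih (by omega) a

lemma singleton_mem_semiAbReturns {v : List α} {i : ℕ} (hi : i ∈ abOcc w v)
    (hi' : i + 1 ∈ abOcc w v) : [w i] ∈ semiAbReturns w v :=
  ⟨i, i + 1, hi, hi', by omega, fun k hk hk' => by omega, by simp [wordAt_one]⟩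

lemma atLeastKAbReturns_card_of_forall_singleton_mem [Fintype α] {v : List α}
    (h : ∀ a : α, [a] ∈ semiAbReturns w v) : AtLeastKAbReturns w v (Fintype.card α) := by
  refine ⟨fun i => [(Fintype.equivFin α).symm i], fun i j hij => ?_,
    fun i => ⟨_, h _, fun _ => rfl⟩⟩
  have := hij ((Fintype.equivFin α).symm i)
  simp only [List.count_singleton, beq_self_eq_true, if_true, beq_iff_eq] at this
  split_ifs at this with heq
  exact (Fintype.equivFin α).symm.injective heq.symm

end Occurrences

theorem stmt4_general {α : Type*} [DecidableEq α] [Fintype α]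
    (w : ℕ → α)
    (u v : List α) (hall : ∀ a : α, a ∈ u)
    (hvu : IsFactorW w (v ++ u)) (hpre : u <+: v ++ u) :
    AtLeastKAbReturns w v (Fintype.card α) := by
  obtain ⟨p, hv, hu, hu'⟩ := exists_occW_of_isFactorW_append hvu hpre
  have hper : ∀ x < u.length, w (p + x + v.length) = w (p + x) := fun x hx => by
    rw [add_right_comm, ← getElem_eq_of_mem_occW hu' x hx, getElem_eq_of_mem_occW hu x hx]
  have hocc := add_mem_abOcc_of_periodic (mem_abOcc_of_mem_occW hv) hper
  refine atLeastKAbReturns_card_of_forall_singleton_mem fun a => ?_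
  obtain ⟨x, hx, rfl⟩ := exists_lt_of_mem_occW hu (hall a)
  exact singleton_mem_semiAbReturns (hocc x hx.le) (hocc (x + 1) hx)

/-- If `w` is aperiodic over a `k`-letter alphabet, `u` a factor containing all letters,
and `v ++ u ≠ u` is a factor beginning with an occurrence of `u`, then the abelian class
of `v` has at least `k` abelian returns. -/
theorem stmt4 {α : Type*} [DecidableEq α] [Fintype α]
    (w : ℕ → α) (hap : ¬ UltPeriodicW w)
    (u v : List α) (hu : IsFactorW w u) (hall : ∀ a : α, a ∈ u)
    (hvu : IsFactorW w (v ++ u)) (hne : v ++ u ≠ u) (hpre : u <+: v ++ u) :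
    AtLeastKAbReturns w v (Fintype.card α) :=
  stmt4_general w u v hall hvu hpre
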